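/- Let L ≥ 1 and let d_0 < d_1 < ⋯ < d_{L−1} be real interface depths, with layer strips Υ_0 = {(x,y) : y > −d_0}, Υ_L = {(x,y) : y < −d_{L−1}}, and Υ_ℓ = {(x,y) : −d_ℓ < y < −d_{ℓ−1}} for 1 ≤ ℓ ≤ L−1. Let ℓ, ℓ′ ∈ {0, …, L} and ∗, ★ ∈ {↑, ↓} be such that none of the following holds: (ℓ = 0 and ∗ = ↓), (ℓ = L and ∗ = ↑), (ℓ′ = 0 and ★ = ↑), (ℓ′ = L and ★ = ↓). Then for every target r ∈ Υ_ℓ and every source r′ ∈ Υ_{ℓ′}, the effective transmission distance satisfies |hatτ^{∗★}_{ℓℓ′}(r) − breveτ^{★}_{ℓℓ′}(r′)| ≥ |r − breveτ^{★}_{ℓℓ′}(r′)|, i.e. the distance from the effective target location to the equivalent polarization source is at least the distance from the true target to the equivalent polarization source. -/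
import Mathlib


/-- Reflection of a point of ℝ² across the interface y = −d_m. -/
def interfaceReflect (d : ℕ → ℝ) (m : ℕ) (r : ℝ × ℝ) : ℝ × ℝ :=
  (r.1, -2 * d m - r.2)

/-- Equivalent polarization coordinates breveτ^{★}_{ℓℓ′}(r′) of a source r′ in layer ℓ′ seen
from layer ℓ; the direction ★ is encoded as `Bool` with `true` = ↑ and `false` = ↓. -/
def breveTau (d : ℕ → ℝ) (ℓ ℓ' : ℕ) (star : Bool) (r' : ℝ × ℝ) : ℝ × ℝ :=
  if star then (if ℓ < ℓ' then r' else interfaceReflect d (ℓ' - 1) r')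
  else (if ℓ ≤ ℓ' then interfaceReflect d ℓ' r' else r')

/-- Effective location hatτ^{∗★}_{ℓℓ′}(r) of a target r in layer ℓ; the directions ∗ (wave
arriving at the target) and ★ (wave leaving the source) are encoded as `Bool` with
`true` = ↑ and `false` = ↓. -/
def hatTau (d : ℕ → ℝ) (ℓ ℓ' : ℕ) (ast star : Bool) (r : ℝ × ℝ) : ℝ × ℝ :=
  match ast, star with
  | true, true => if ℓ < ℓ' then r else interfaceReflect d ℓ r
  | true, false => if ℓ ≤ ℓ' then r else interfaceReflect d ℓ r
  | false, true => if ℓ < ℓ' then interfaceReflect d (ℓ - 1) r else r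
  | false, false => if ℓ ≤ ℓ' then interfaceReflect d (ℓ - 1) r else r

/-- Membership in the open strip Υ_ℓ of the ℓ-th layer, for a medium with L+1 layers and
interfaces y = −d_0 > ⋯ > −d_{L−1}. -/
def inStrip (d : ℕ → ℝ) (L ℓ : ℕ) (r : ℝ × ℝ) : Prop :=
  if ℓ = 0 then r.2 > -d 0
  else if ℓ = L then r.2 < -d (L - 1)
  else -d ℓ < r.2 ∧ r.2 < -d (ℓ - 1)

/-- Euclidean distance on ℝ². -/
noncomputable def euclDist (p q : ℝ × ℝ) : ℝ :=
  Real.sqrt ((p.1 - q.1) ^ 2 + (p.2 - q.2) ^ 2)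

lemma d_mono (L : ℕ) (d : ℕ → ℝ) (hd : ∀ i : ℕ, i + 1 < L → d i < d (i + 1)) :
    ∀ i j : ℕ, i ≤ j → j < L → d i ≤ d j := by
  intro i j hij hjL
  induction j with
  | zero => simp [Nat.le_zero.mp hij]
  | succ n ih =>
    rcases Nat.lt_or_ge i (n + 1) with h | h
    · exact (ih (Nat.lt_succ_iff.mp h) (Nat.lt_of_succ_lt hjL)).trans (hd n hjL).le
    · have : i = n + 1 := le_antisymm hij h
      simp [this]

lemma reflect_dist_ge (d : ℕ → ℝ) (m : ℕ) (r s : ℝ × ℝ)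
    (h : 0 ≤ (r.2 + d m) * (s.2 + d m)) :
    euclDist r s ≤ euclDist (interfaceReflect d m r) s := by
  unfold euclDist interfaceReflect
  apply Real.sqrt_le_sqrt
  simp only
  nlinarith [h]

lemma strip_gt (d : ℕ → ℝ) (L ℓ : ℕ) (r : ℝ × ℝ) (h : inStrip d L ℓ r) (hℓ : ℓ < L) :
    -d ℓ < r.2 := by
  unfold inStrip at h
  rcases Nat.eq_zero_or_pos ℓ with h0 | h0
  · subst h0; simpa using h
  · rw [if_neg (by omega), if_neg (by omega)] at h
    exact h.1

lemma strip_lt (d : ℕ → ℝ) (L ℓ : ℕ) (r : ℝ × ℝ) (h : inStrip d L ℓ r)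
    (h1 : 1 ≤ ℓ) (h2 : ℓ ≤ L) : r.2 < -d (ℓ - 1) := by
  unfold inStrip at h
  rcases eq_or_lt_of_le h2 with hE | hlt
  · rw [if_neg (by omega), if_pos hE] at h
    rw [hE]; exact h
  · rw [if_neg (by omega), if_neg (by omega)] at h
    exact h.2

/-- for every non-vanishing reaction component (ℓ, ℓ′, ∗, ★), every target
r ∈ Υ_ℓ and every source r′ ∈ Υ_{ℓ′}, the effective transmission distance
|hatτ^{∗★}_{ℓℓ′}(r) − breveτ^{★}_{ℓℓ′}(r′)| is at least |r − breveτ^{★}_{ℓℓ′}(r′)|. -/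
theorem effective_transmission_distance_ge
    (L : ℕ) (hL : 1 ≤ L) (d : ℕ → ℝ)
    (hd : ∀ i : ℕ, i + 1 < L → d i < d (i + 1))
    (ℓ ℓ' : ℕ) (hℓ : ℓ ≤ L) (hℓ' : ℓ' ≤ L) (ast star : Bool)
    (h1 : ¬(ℓ = 0 ∧ ast = false)) (h2 : ¬(ℓ = L ∧ ast = true))
    (h3 : ¬(ℓ' = 0 ∧ star = true)) (h4 : ¬(ℓ' = L ∧ star = false))
    (r r' : ℝ × ℝ) (hr : inStrip d L ℓ r) (hr' : inStrip d L ℓ' r') :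
    euclDist (hatTau d ℓ ℓ' ast star r) (breveTau d ℓ ℓ' star r')
      ≥ euclDist r (breveTau d ℓ ℓ' star r') := by
  have dm := d_mono L d hd
  cases ast <;> cases star <;>
    simp only [hatTau, breveTau, if_true, Bool.false_eq_true, if_false, ite_true, ite_false]
  · -- ast = ↓, star = ↓
    have hℓ0 : ℓ ≠ 0 := fun h => h1 ⟨h, rfl⟩
    have hℓ'L : ℓ' ≠ L := fun h => h4 ⟨h, rfl⟩
    by_cases hle : ℓ ≤ ℓ'
    · rw [if_pos hle, if_pos hle]
      apply reflect_dist_ge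
      have hrlt : r.2 < -d (ℓ - 1) := strip_lt d L ℓ r hr (by omega) hℓ
      have hr'gt : -d ℓ' < r'.2 := strip_gt d L ℓ' r' hr' (by omega)
      have hdd : d (ℓ - 1) ≤ d ℓ' := dm (ℓ - 1) ℓ' (by omega) (by omega)
      simp only [interfaceReflect]
      nlinarith
    · rw [if_neg hle, if_neg hle]
  · -- ast = ↓, star = ↑
    have hℓ0 : ℓ ≠ 0 := fun h => h1 ⟨h, rfl⟩
    have hℓ'0 : ℓ' ≠ 0 := fun h => h3 ⟨h, rfl⟩
    by_cases hlt : ℓ < ℓ'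
    · rw [if_pos hlt, if_pos hlt]
      apply reflect_dist_ge
      have hrlt : r.2 < -d (ℓ - 1) := strip_lt d L ℓ r hr (by omega) hℓ
      have hr'lt : r'.2 < -d (ℓ' - 1) := strip_lt d L ℓ' r' hr' (by omega) hℓ'
      have hdd : d (ℓ - 1) ≤ d (ℓ' - 1) := dm (ℓ - 1) (ℓ' - 1) (by omega) (by omega)
      nlinarith
    · rw [if_neg hlt, if_neg hlt]
  · -- ast = ↑, star = ↓
    have hℓL : ℓ ≠ L := fun h => h2 ⟨h, rfl⟩
    by_cases hle : ℓ ≤ ℓ'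
    · rw [if_pos hle, if_pos hle]
    · rw [if_neg hle, if_neg hle]
      apply reflect_dist_ge
      have hrgt : -d ℓ < r.2 := strip_gt d L ℓ r hr (by omega)
      have hr'gt : -d ℓ' < r'.2 := strip_gt d L ℓ' r' hr' (by omega)
      have hdd : d ℓ' ≤ d ℓ := dm ℓ' ℓ (by omega) (by omega)
      nlinarith
  · -- ast = ↑, star = ↑
    have hℓL : ℓ ≠ L := fun h => h2 ⟨h, rfl⟩
    have hℓ'0 : ℓ' ≠ 0 := fun h => h3 ⟨h, rfl⟩
    by_cases hlt : ℓ < ℓ'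
    · rw [if_pos hlt, if_pos hlt]
    · rw [if_neg hlt, if_neg hlt]
      apply reflect_dist_ge
      have hrgt : -d ℓ < r.2 := strip_gt d L ℓ r hr (by omega)
      have hr'lt : r'.2 < -d (ℓ' - 1) := strip_lt d L ℓ' r' hr' (by omega) hℓ'
      have hdd : d (ℓ' - 1) ≤ d ℓ := dm (ℓ' - 1) ℓ (by omega) (by omega)
      simp only [interfaceReflect]
      nlinarith
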